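/- arXiv:1911.01372 — 3 statements merged into one kernel-verified Lean document; each statement's English description precedes it below -/
import Mathlib

section
/- Suppose a₁₂ ≠ 0. If t ↦ (x₁(t), x₂(t)) is a solution of system (1), then t ↦ (x(t), y(t)) := (x₁(t), a₂₂ x₁(t) − a₁₂ x₂(t) − b₁) is a solution of the Liénard system (2) with parameters T_L = tr(A_L), T_R = tr(A_R), D_L = det(A_L), D_R = det(A_R), and a = a₁₂ b₂ − a₂₂ b₁. -/
/-!
The coordinate `y = a₂₂ x₁ - a₁₂ x₂ - b₁` is chosen so that `ẋ₁ = a₁₁ x₁ + a₁₂ x₂ + b₁ = tr(A) x₁ - y`;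
differentiating `y` and eliminating `x₂` with the same relation gives `ẏ = det(A) x₁ - a`.
The chart involves only `a₁₂`, `a₂₂` and `b`, which the two zones share, so one chart serves both
half-planes, and since `x = x₁` it preserves the switching line.
-/

noncomputable section

/-- The piecewise linear vector field of system (1):
`ẋ = A_L x + b` if `x₁ ≤ 0` and `ẋ = A_R x + b` if `x₁ ≥ 0`. -/
def pwVF (AL AR : Matrix (Fin 2) (Fin 2) ℝ) (b : Fin 2 → ℝ) (x : Fin 2 → ℝ) : Fin 2 → ℝ :=
  if x 0 ≤ 0 then AL.mulVec x + b else AR.mulVec x + b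

/-- The continuous piecewise linear Liénard vector field of system (2). -/
def lienardVF (TL TR DL DR a : ℝ) (p : ℝ × ℝ) : ℝ × ℝ :=
  if p.1 ≤ 0 then (TL * p.1 - p.2, DL * p.1 - a) else (TR * p.1 - p.2, DR * p.1 - a)

def lienardChart (A : Matrix (Fin 2) (Fin 2) ℝ) (b : Fin 2 → ℝ) (x : Fin 2 → ℝ) : ℝ × ℝ :=
  (x 0, A 1 1 * x 0 - A 0 1 * x 1 - b 0)

def lienardChartLinear (A : Matrix (Fin 2) (Fin 2) ℝ) (v : Fin 2 → ℝ) : ℝ × ℝ :=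
  (v 0, A 1 1 * v 0 - A 0 1 * v 1)

section

variable (A : Matrix (Fin 2) (Fin 2) ℝ) (b : Fin 2 → ℝ)

theorem hasDerivAt_lienardChart_comp {u : ℝ → Fin 2 → ℝ} {u' : Fin 2 → ℝ} {t : ℝ}
    (hu : HasDerivAt u u' t) :
    HasDerivAt (fun s => lienardChart A b (u s)) (lienardChartLinear A u') t := by
  rw [hasDerivAt_pi] at hu
  exact (hu 0).prodMk ((((hu 0).const_mul (A 1 1)).sub ((hu 1).const_mul (A 0 1))).sub_const (b 0))

theorem lienardChartLinear_mulVec_add (x : Fin 2 → ℝ) :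
    lienardChartLinear A (A.mulVec x + b) =
      (A.trace * x 0 - (lienardChart A b x).2, A.det * x 0 - (A 0 1 * b 1 - A 1 1 * b 0)) := by
  simp only [lienardChartLinear, lienardChart, Pi.add_apply, Matrix.mulVec, dotProduct,
    Fin.sum_univ_two, Matrix.trace_fin_two, Matrix.det_fin_two]
  ext <;> ring

end

theorem lienardChartLinear_pwVF {AL AR : Matrix (Fin 2) (Fin 2) ℝ} (b : Fin 2 → ℝ)
    (h12 : AL 0 1 = AR 0 1) (h22 : AL 1 1 = AR 1 1) (x : Fin 2 → ℝ) :
    lienardChartLinear AL (pwVF AL AR b x) =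
      lienardVF AL.trace AR.trace AL.det AR.det (AL 0 1 * b 1 - AL 1 1 * b 0)
        (lienardChart AL b x) := by
  by_cases hx : x 0 ≤ 0
  · simp only [pwVF, lienardVF, lienardChart, hx, if_true]
    exact lienardChartLinear_mulVec_add AL b x
  · simp only [pwVF, lienardVF, lienardChartLinear, lienardChart, hx, if_false, h12, h22]
    exact lienardChartLinear_mulVec_add AR b x

theorem lienard_change_of_variables_general (AL AR : Matrix (Fin 2) (Fin 2) ℝ) (b : Fin 2 → ℝ)
    (h12 : AL 0 1 = AR 0 1) (h22 : AL 1 1 = AR 1 1)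
    (u : ℝ → Fin 2 → ℝ) (hsol : ∀ t, HasDerivAt u (pwVF AL AR b (u t)) t) :
    ∀ t, HasDerivAt (fun s => ((u s 0, AL 1 1 * u s 0 - AL 0 1 * u s 1 - b 0) : ℝ × ℝ))
      (lienardVF AL.trace AR.trace AL.det AR.det (AL 0 1 * b 1 - AL 1 1 * b 0)
        (u t 0, AL 1 1 * u t 0 - AL 0 1 * u t 1 - b 0)) t := fun t =>
  (hasDerivAt_lienardChart_comp AL b (hsol t)).congr_deriv
    (lienardChartLinear_pwVF b h12 h22 (u t))

/-- When `a₁₂ ≠ 0`, the linear change of variables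
`(x, y) = (x₁, a₂₂ x₁ - a₁₂ x₂ - b₁)` transforms solutions of system (1) into
solutions of the Liénard system (2) with parameters `T_L = tr A_L`, `T_R = tr A_R`,
`D_L = det A_L`, `D_R = det A_R`, and `a = a₁₂ b₂ - a₂₂ b₁`. -/
theorem lienard_change_of_variables (AL AR : Matrix (Fin 2) (Fin 2) ℝ) (b : Fin 2 → ℝ)
    (h12 : AL 0 1 = AR 0 1) (h22 : AL 1 1 = AR 1 1) (ha12 : AL 0 1 ≠ 0)
    (u : ℝ → Fin 2 → ℝ) (hsol : ∀ t, HasDerivAt u (pwVF AL AR b (u t)) t) :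
    ∀ t, HasDerivAt (fun s => ((u s 0, AL 1 1 * u s 0 - AL 0 1 * u s 1 - b 0) : ℝ × ℝ))
      (lienardVF AL.trace AR.trace AL.det AR.det (AL 0 1 * b 1 - AL 1 1 * b 0)
        (u t 0, AL 1 1 * u t 0 - AL 0 1 * u t 1 - b 0)) t :=
  lienard_change_of_variables_general AL AR b h12 h22 u hsol

end
end

section
/- A limit cycle of system (2) cannot be entirely contained in the closed left half-plane {(x,y) : x ≤ 0}, nor entirely contained in the closed right half-plane {(x,y) : x ≥ 0}. Equivalently, every limit cycle of system (2) intersects both open half-planes {x < 0} and {x > 0}. -/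
open Set Metric Filter

noncomputable section

/-- `x : ℝ → E` is a (global) solution of the autonomous ODE `ẋ = f(x)`. -/
def IsSolution {E : Type*} [NormedAddCommGroup E] [NormedSpace ℝ E]
    (f : E → E) (x : ℝ → E) : Prop :=
  ∀ t, HasDerivAt x (f (x t)) t

/-- A periodic orbit: the image (range) of a nonconstant periodic solution. -/
def IsPeriodicOrbit {E : Type*} [NormedAddCommGroup E] [NormedSpace ℝ E]
    (f : E → E) (Γ : Set E) : Prop :=
  ∃ x : ℝ → E, IsSolution f x ∧ (∃ T > 0, Function.Periodic x T) ∧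
    (¬ ∃ c, ∀ t, x t = c) ∧ Γ = Set.range x

/-- A limit cycle: an isolated periodic orbit, i.e. a periodic orbit having a
neighborhood containing no other periodic orbit. -/
def IsLimitCycle {E : Type*} [NormedAddCommGroup E] [NormedSpace ℝ E]
    (f : E → E) (Γ : Set E) : Prop :=
  IsPeriodicOrbit f Γ ∧
    ∃ U : Set E, IsOpen U ∧ Γ ⊆ U ∧
      ∀ Γ' : Set E, IsPeriodicOrbit f Γ' → Γ' ⊆ U → Γ' = Γ

/-!
On a closed convex set `C` where the field is affine, `p ↦ A p + b`, a periodic orbit inside `C`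
cannot be isolated. Integrating `ż = A z + b` over a period shows that the time average `c` of the
orbit is an equilibrium, and `c ∈ C` by convexity. Since `A c + b = 0`, every homothety centred
at `c` with ratio `r ∈ (0, 1]` maps solutions in `C` to solutions in `C` (with time unchanged), so
the orbit is accumulated by its own shrunken copies, which are distinct from it: the point of
the orbit farthest from `c` is not on them. Each closed half-plane of system (2) is such a set.
-/

open AffineMap Topology

section

variable {E : Type*} [NormedAddCommGroup E] [NormedSpace ℝ E]

theorem homothety_image_ne_self {K : Set E} (hK : IsCompact K) {c q : E} (hq : q ∈ K)
    (hqc : q ≠ c) {r : ℝ} (hr₀ : 0 ≤ r) (hr₁ : r < 1) : homothety c r '' K ≠ K := by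
  intro hKr
  obtain ⟨p, hpK, hpmax⟩ :=
    hK.exists_isMaxOn ⟨q, hq⟩ (continuous_id.dist continuous_const).continuousOn
  have hp : 0 < dist p c := (dist_pos.2 hqc).trans_le (hpmax hq)
  obtain ⟨p', hp'K, rfl⟩ : p ∈ homothety c r '' K := by rwa [hKr]
  have hle : dist p' c ≤ dist (homothety c r p') c := hpmax hp'K
  have hshrink : dist (homothety c r p') c = r * dist p' c := by
    rw [dist_homothety_center, Real.norm_of_nonneg hr₀, dist_comm]
  nlinarith

theorem eventually_homothety_image_subset {K U : Set E} (hK : IsCompact K) (hU : IsOpen U)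
    (hKU : K ⊆ U) (c : E) : ∀ᶠ r in 𝓝 (1 : ℝ), homothety c r '' K ⊆ U := by
  have hcont : Continuous fun q : ℝ × E => homothety c q.1 q.2 := by
    simp only [homothety_apply, vsub_eq_sub, vadd_eq_add]
    fun_prop
  have := hK.eventually_forall_of_forall_eventually (x₀ := (1 : ℝ))
    (P := fun r p => homothety c r p ∈ U) fun p hp => hcont.continuousAt.preimage_mem_nhds <| by
      rw [homothety_one]
      exact hU.mem_nhds (hKU hp)
  filter_upwards [this] with r hr
  exact image_subset_iff.2 hr

theorem map_homothety_add_of_map_add_eq_zero {A : E →L[ℝ] E} {b c : E} (hc : A c + b = 0)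
    (r : ℝ) (p : E) :
    A (homothety c r p) + b = r • (A p + b) := by
  simp only [homothety_apply, vsub_eq_sub, vadd_eq_add, map_add, map_smul, map_sub]
  linear_combination (norm := module) (1 - r) • hc

theorem map_intervalAverage_add_eq_zero [CompleteSpace E] (A : E →L[ℝ] E) (b : E) {z : ℝ → E}
    {T : ℝ} (hT : 0 < T) (hz : ∀ t, HasDerivAt z (A (z t) + b) t) (hper : z T = z 0) :
    A (⨍ t in 0..T, z t) + b = 0 := by
  have hzc : Continuous z := continuous_iff_continuousAt.2 fun t => (hz t).continuousAt
  have hAz : Continuous fun t => A (z t) := by fun_prop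
  have hftc : ∫ t in 0..T, (A (z t) + b) = 0 := by
    rw [intervalIntegral.integral_eq_sub_of_hasDerivAt (fun t _ => hz t)
      ((hAz.add continuous_const).intervalIntegrable _ _), hper, sub_self]
  rw [intervalIntegral.integral_add (hAz.intervalIntegrable _ _) intervalIntegrable_const,
    A.intervalIntegral_comp_comm (hzc.intervalIntegrable 0 T), intervalIntegral.integral_const,
    sub_zero] at hftc
  rw [interval_average_eq, sub_zero, map_smul]
  calc T⁻¹ • A (∫ t in 0..T, z t) + b = T⁻¹ • (A (∫ t in 0..T, z t) + T • b) := by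
        rw [smul_add, smul_smul, inv_mul_cancel₀ hT.ne', one_smul]
    _ = 0 := by rw [hftc, smul_zero]

variable {f : E → E} {Γ C : Set E}

theorem IsSolution.continuous {z : ℝ → E} (hz : IsSolution f z) : Continuous z :=
  continuous_iff_continuousAt.2 fun t => (hz t).continuousAt

namespace IsPeriodicOrbit

theorem isCompact (h : IsPeriodicOrbit f Γ) : IsCompact Γ := by
  obtain ⟨z, hz, ⟨T, hT, hper⟩, -, rfl⟩ := h
  exact hper.compact_of_continuous hT.ne' hz.continuous

theorem exists_ne (h : IsPeriodicOrbit f Γ) (c : E) : ∃ q ∈ Γ, q ≠ c := by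
  obtain ⟨z, -, -, hnc, rfl⟩ := h
  push Not at hnc
  obtain ⟨t, ht⟩ := hnc c
  exact ⟨z t, mem_range_self t, ht⟩

variable {A : E →L[ℝ] E} {b : E}

theorem exists_equilibrium_mem [CompleteSpace E] (h : IsPeriodicOrbit f Γ)
    (hC : Convex ℝ C) (hCc : IsClosed C) (hΓC : Γ ⊆ C) (hf : ∀ p ∈ C, f p = A p + b) :
    ∃ c ∈ C, A c + b = 0 := by
  obtain ⟨z, hz, ⟨T, hT, hper⟩, -, rfl⟩ := h
  have hzC : ∀ t, z t ∈ C := fun t => hΓC (mem_range_self t)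
  refine ⟨⨍ t in 0..T, z t, ?_, map_intervalAverage_add_eq_zero A b hT
    (fun t => hf _ (hzC t) ▸ hz t) (by simpa using hper 0)⟩
  exact hC.set_average_mem hCc (by simp [hT.ne']) (by simp) (.of_forall fun t => hzC t)
    hz.continuous.integrableOn_uIoc

theorem homothety_image (h : IsPeriodicOrbit f Γ) (hC : Convex ℝ C) (hΓC : Γ ⊆ C)
    (hf : ∀ p ∈ C, f p = A p + b) {c : E} (hcC : c ∈ C) (hc : A c + b = 0) {r : ℝ}
    (hr : r ∈ Ioc 0 1) : IsPeriodicOrbit f (homothety c r '' Γ) := by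
  obtain ⟨z, hz, ⟨T, hT, hper⟩, hnc, rfl⟩ := h
  have hwC : ∀ t, homothety c r (z t) ∈ C := fun t => by
    rw [homothety_eq_lineMap]
    exact hC.lineMap_mem hcC (hΓC (mem_range_self t)) ⟨hr.1.le, hr.2⟩
  refine ⟨homothety c r ∘ z, fun t => ?_, ⟨T, hT, hper.comp _⟩, ?_, (range_comp _ _).symm⟩
  · have hd := (((hz t).sub_const c).const_smul r).add_const c
    rw [hf _ (hΓC (mem_range_self t))] at hd
    rw [Function.comp_apply, hf _ (hwC t)]
    convert hd using 1
    · ext s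
      simp [homothety_apply]
    · exact map_homothety_add_of_map_add_eq_zero hc r (z t)
  · rintro ⟨d, hd⟩
    exact hnc ⟨z 0, fun t => homothety_injective c hr.1.ne' ((hd t).trans (hd 0).symm)⟩

end IsPeriodicOrbit

theorem IsLimitCycle.not_subset_of_affine_on [CompleteSpace E] (h : IsLimitCycle f Γ)
    (hC : Convex ℝ C) (hCc : IsClosed C) {A : E →L[ℝ] E} {b : E} (hf : ∀ p ∈ C, f p = A p + b) :
    ¬ Γ ⊆ C := by
  intro hΓC
  obtain ⟨hΓ, U, hU, hΓU, hiso⟩ := h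
  obtain ⟨c, hcC, hc⟩ := hΓ.exists_equilibrium_mem hC hCc hΓC hf
  obtain ⟨r, hrU, hr⟩ := ((eventually_homothety_image_subset hΓ.isCompact hU hΓU c).filter_mono
      nhdsWithin_le_nhds |>.and (Ioo_mem_nhdsLT one_pos)).exists
  obtain ⟨q, hqΓ, hqc⟩ := hΓ.exists_ne c
  exact homothety_image_ne_self hΓ.isCompact hqΓ hqc hr.1.le hr.2 <|
    hiso _ (hΓ.homothety_image hC hΓC hf hcC hc ⟨hr.1, hr.2.le⟩) hrU

end

def lienardLinear (T D : ℝ) : ℝ × ℝ →L[ℝ] ℝ × ℝ :=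
  (T • ContinuousLinearMap.fst ℝ ℝ ℝ - ContinuousLinearMap.snd ℝ ℝ ℝ).prod
    (D • ContinuousLinearMap.fst ℝ ℝ ℝ)

theorem lienardVF_of_nonpos (TL TR DL DR a : ℝ) {p : ℝ × ℝ} (hp : p.1 ≤ 0) :
    lienardVF TL TR DL DR a p = lienardLinear TL DL p + (0, -a) := by
  simp [lienardVF, lienardLinear, hp, sub_eq_add_neg]

theorem lienardVF_of_nonneg (TL TR DL DR a : ℝ) {p : ℝ × ℝ} (hp : 0 ≤ p.1) :
    lienardVF TL TR DL DR a p = lienardLinear TR DR p + (0, -a) := by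
  rcases hp.eq_or_lt with h0 | hpos
  · simp [lienardVF, lienardLinear, ← h0, sub_eq_add_neg]
  · simp [lienardVF, lienardLinear, hpos.not_ge, sub_eq_add_neg]

/-- A limit cycle of system (2) cannot be contained in the closed left half-plane nor
in the closed right half-plane: it meets both open half-planes `{x < 0}` and `{x > 0}`. -/
theorem limit_cycle_meets_both_zones (TL TR DL DR a : ℝ) (Γ : Set (ℝ × ℝ))
    (h : IsLimitCycle (lienardVF TL TR DL DR a) Γ) :
    (∃ p ∈ Γ, p.1 < 0) ∧ (∃ p ∈ Γ, 0 < p.1) := by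
  constructor
  · by_contra! hΓ
    exact h.not_subset_of_affine_on (convex_halfSpace_ge (LinearMap.fst ℝ ℝ ℝ).isLinear 0)
      (isClosed_le continuous_const continuous_fst)
      (fun p hp => lienardVF_of_nonneg TL TR DL DR a hp) hΓ
  · by_contra! hΓ
    exact h.not_subset_of_affine_on (convex_halfSpace_le (LinearMap.fst ℝ ℝ ℝ).isLinear 0)
      (isClosed_le continuous_fst continuous_const)
      (fun p hp => lienardVF_of_nonpos TL TR DL DR a hp) hΓ
end
end

section
/- Let y₀* > 0, y₁* < 0 be real numbers with W_L(y₀*) ≠ 0, W_R(y₀*) ≠ 0. Then the quantities d_L := (y₀* W_L(y₁*))/(y₁* W_L(y₀*)) and d_R := (y₀* W_R(y₁*))/(y₁* W_R(y₀*)) satisfy d_R − d_L = C(y₀*, y₁*)·F(y₀*, y₁*), where C(y₀,y₁) = −y₀(y₀ − y₁)/(y₁ W_R(y₀) W_L(y₀)). Consequently, if additionally W_L(y₀*) > 0 and W_R(y₀*) > 0, then C(y₀*, y₁*) > 0, so the sign of d_R − d_L equals the sign of F(y₀*, y₁*). -/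
/-!
The difference `d_R - d_L` has numerator `W_R(y₁) W_L(y₀) - W_L(y₁) W_R(y₀)`, which is
antisymmetric in `(y₀, y₁)` and hence divisible by `y₁ - y₀`; the quotient is exactly `F(y₀, y₁)`.
What remains is the factor `C`, whose numerator and denominator are both negative when
`y₀ > 0 > y₁` and `W_L(y₀), W_R(y₀) > 0`.
-/

noncomputable section

/-- The quadratic polynomial `W(y) = D y² - a T y + a²` (this is `W_L` for
`(D,T) = (D_L,T_L)` and `W_R` for `(D,T) = (D_R,T_R)`). -/
def W (D T a y : ℝ) : ℝ := D * y ^ 2 - a * T * y + a ^ 2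

/-- The quadratic function
`F(y₀,y₁) = a³(T_L - T_R) + a(D_L T_R - D_R T_L) y₀ y₁ + a²(D_R - D_L)(y₀ + y₁)`. -/
def Fq (TL TR DL DR a y₀ y₁ : ℝ) : ℝ :=
  a ^ 3 * (TL - TR) + a * (DL * TR - DR * TL) * y₀ * y₁ + a ^ 2 * (DR - DL) * (y₀ + y₁)

theorem Real.sign_mul_of_pos {c : ℝ} (hc : 0 < c) (x : ℝ) : Real.sign (c * x) = Real.sign x := by
  simp only [Real.sign, ← smul_eq_mul, smul_neg_iff_of_pos_left hc, smul_pos_iff_of_pos_left hc]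

theorem W_mul_W_sub_W_mul_W (TL TR DL DR a y₀ y₁ : ℝ) :
    W DR TR a y₁ * W DL TL a y₀ - W DL TL a y₁ * W DR TR a y₀
      = (y₁ - y₀) * Fq TL TR DL DR a y₀ y₁ := by
  simp only [W, Fq]
  ring

theorem div_sub_div_W_eq (TL TR DL DR a y₀ y₁ : ℝ) (hy₁ : y₁ ≠ 0)
    (hL : W DL TL a y₀ ≠ 0) (hR : W DR TR a y₀ ≠ 0) :
    y₀ * W DR TR a y₁ / (y₁ * W DR TR a y₀) - y₀ * W DL TL a y₁ / (y₁ * W DL TL a y₀)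
      = (-(y₀ * (y₀ - y₁)) / (y₁ * W DR TR a y₀ * W DL TL a y₀)) * Fq TL TR DL DR a y₀ y₁ := by
  have hcross := W_mul_W_sub_W_mul_W TL TR DL DR a y₀ y₁
  field_simp
  linear_combination y₀ * hcross

theorem neg_mul_sub_div_pos {y₀ y₁ p q : ℝ} (hy₀ : 0 < y₀) (hy₁ : y₁ < 0)
    (hp : 0 < p) (hq : 0 < q) :
    0 < -(y₀ * (y₀ - y₁)) / (y₁ * p * q) := by
  apply div_pos_of_neg_of_neg
  · have : 0 < y₀ * (y₀ - y₁) := mul_pos hy₀ (by linarith)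
    linarith
  · exact mul_neg_of_neg_of_pos (mul_neg_of_neg_of_pos hy₁ hp) hq

/-- The derivative of the displacement function factorizes:
`d_R - d_L = C(y₀*,y₁*) F(y₀*,y₁*)` where
`d_L = y₀* W_L(y₁*) / (y₁* W_L(y₀*))`, `d_R = y₀* W_R(y₁*) / (y₁* W_R(y₀*))` and
`C(y₀,y₁) = -y₀ (y₀ - y₁) / (y₁ W_R(y₀) W_L(y₀))`; moreover, if `W_L(y₀*) > 0` and
`W_R(y₀*) > 0`, then `C(y₀*,y₁*) > 0` and the sign of `d_R - d_L` is the sign of `F`. -/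
theorem displacement_derivative_sign (TL TR DL DR a y₀ y₁ : ℝ)
    (hy₀ : 0 < y₀) (hy₁ : y₁ < 0)
    (hL : W DL TL a y₀ ≠ 0) (hR : W DR TR a y₀ ≠ 0) :
    (y₀ * W DR TR a y₁ / (y₁ * W DR TR a y₀) - y₀ * W DL TL a y₁ / (y₁ * W DL TL a y₀))
      = (-(y₀ * (y₀ - y₁)) / (y₁ * W DR TR a y₀ * W DL TL a y₀)) * Fq TL TR DL DR a y₀ y₁ ∧
    (0 < W DL TL a y₀ → 0 < W DR TR a y₀ →
      0 < -(y₀ * (y₀ - y₁)) / (y₁ * W DR TR a y₀ * W DL TL a y₀) ∧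
      Real.sign (y₀ * W DR TR a y₁ / (y₁ * W DR TR a y₀)
          - y₀ * W DL TL a y₁ / (y₁ * W DL TL a y₀))
        = Real.sign (Fq TL TR DL DR a y₀ y₁)) := by
  have key := div_sub_div_W_eq TL TR DL DR a y₀ y₁ hy₁.ne hL hR
  refine ⟨key, fun hL0 hR0 => ?_⟩
  have hC := neg_mul_sub_div_pos hy₀ hy₁ hR0 hL0
  refine ⟨hC, ?_⟩
  rw [key, Real.sign_mul_of_pos hC]
end
end
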